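/- Let n ≥ 1 and let d : {1, …, n} → {H, V} be any assignment of axis labels to segment indices. Let k be defined by: k − 1 is the maximum number of consecutive indices on which d takes the value V, with k = 1 if d never takes the value V. Then every valid orthogonal path drawing p_0, …, p_n in which, for every i, segment s_i is vertical exactly when d(i) = V has at least k rows. -/
import Mathlib


/-- A point `q` lies on the axis-parallel closed segment with endpoints `a` and `b`.
(For segments parallel to a coordinate axis, the segment coincides with the bounding box.) -/
def OnSeg (a b q : ℤ × ℤ) : Prop :=
  min a.1 b.1 ≤ q.1 ∧ q.1 ≤ max a.1 b.1 ∧ min a.2 b.2 ≤ q.2 ∧ q.2 ≤ max a.2 b.2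

/-- `p` is an orthogonal path drawing with `n` segments: each consecutive pair of points
differs in exactly one coordinate.  The `i`-th segment joins `p i.castSucc` and `p i.succ`;
it is vertical when the `x`-coordinates agree and horizontal when the `y`-coordinates agree. -/
def IsOrthoDrawing (n : ℕ) (p : Fin (n + 1) → ℤ × ℤ) : Prop :=
  ∀ i : Fin n,
    ((p i.castSucc).1 = (p i.succ).1 ∧ (p i.castSucc).2 ≠ (p i.succ).2) ∨
    ((p i.castSucc).2 = (p i.succ).2 ∧ (p i.castSucc).1 ≠ (p i.succ).1)

/-- Validity of an orthogonal path drawing: (i) the points are pairwise distinct;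
(ii) a point `p j` lies on segment `s i` only when `j = i` or `j = i + 1`;
(iii) two distinct segments intersect in at most one point. -/
def IsValidDrawing (n : ℕ) (p : Fin (n + 1) → ℤ × ℤ) : Prop :=
  IsOrthoDrawing n p ∧
  Function.Injective p ∧
  (∀ (i : Fin n) (j : Fin (n + 1)),
     OnSeg (p i.castSucc) (p i.succ) (p j) → j = i.castSucc ∨ j = i.succ) ∧
  (∀ i j : Fin n, i ≠ j → ∀ q r : ℤ × ℤ,
     OnSeg (p i.castSucc) (p i.succ) q → OnSeg (p j.castSucc) (p j.succ) q →
     OnSeg (p i.castSucc) (p i.succ) r → OnSeg (p j.castSucc) (p j.succ) r → q = r)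

/-- The number of rows of a drawing: the number of distinct `y`-coordinates. -/
def numRows (n : ℕ) (p : Fin (n + 1) → ℤ × ℤ) : ℕ :=
  (Finset.univ.image fun i => (p i).2).card

/-- `q` is a row-by-row compaction of `p`: a valid drawing with the same `x`-coordinates,
in which points sharing a `y`-coordinate in `p` still share a `y`-coordinate. -/
def IsCompaction (n : ℕ) (p q : Fin (n + 1) → ℤ × ℤ) : Prop :=
  IsValidDrawing n q ∧
  (∀ i, (q i).1 = (p i).1) ∧
  (∀ i j, (p i).2 = (p j).2 → (q i).2 = (q j).2)

/-- The path drawing `P(G, u, ℓ)` associated with a walk `u_0, …, u_k` and a vertex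
labeling `ℓ`: the `2k + 2` points `p_{2i} = (i, ℓ (u i))` and `p_{2i+1} = (i + 1, ℓ (u i))`. -/
def pathDrawing {V : Type*} (k : ℕ) (u : Fin (k + 1) → V) (ℓ : V → ℤ) :
    Fin (2 * k + 1 + 1) → ℤ × ℤ :=
  fun j => (((j : ℕ) + 1) / 2, ℓ (u ⟨(j : ℕ) / 2, by omega⟩))

/-- Let `d : Fin n → Bool` (`true` = vertical `V`, `false` = horizontal `H`) with `n ≥ 1`,
and let `k ≥ 1` be such that `k - 1` is the maximum number of consecutive indices on which
`d` takes the value `V` (so `k = 1` when `d` never takes the value `V`).  Then every valid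
orthogonal path drawing whose `i`-th segment is vertical exactly when `d i = true` has at
least `k` rows. -/
theorem rows_lower_bound (n : ℕ) (hn : 1 ≤ n) (d : Fin n → Bool)
    (k : ℕ) (hk1 : 1 ≤ k)
    (hk2 : ∀ (a len : ℕ) (h : a + len ≤ n),
      (∀ j (hj : j < len), d ⟨a + j, by omega⟩ = true) → len ≤ k - 1)
    (hk3 : ∃ (a : ℕ) (h : a + (k - 1) ≤ n),
      ∀ j (hj : j < k - 1), d ⟨a + j, by omega⟩ = true) :
    ∀ p : Fin (n + 1) → ℤ × ℤ, IsValidDrawing n p →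
      (∀ i : Fin n, ((p i.castSucc).1 = (p i.succ).1 ↔ d i = true)) →
      k ≤ numRows n p := by
  obtain ⟨a, ha, hd⟩ := hk3
  intro p hvalid hvert
  have hinj := hvalid.2.1
  -- all x-coordinates of p_a, ..., p_{a+(k-1)} are equal
  have hx : ∀ j (hj : a + j ≤ n), j ≤ k - 1 → (p ⟨a + j, by omega⟩).1 = (p ⟨a, by omega⟩).1 := by
    intro j
    induction j with
    | zero => intro _ _; rfl
    | succ m ih =>
      intro hm hm2
      have hseg : d ⟨a + m, by omega⟩ = true := hd m (by omega)
      have hv := (hvert ⟨a + m, by omega⟩).mpr hseg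
      have e1 : ((⟨a + m, by omega⟩ : Fin n).castSucc : Fin (n+1)) = ⟨a + m, by omega⟩ := rfl
      have e2 : ((⟨a + m, by omega⟩ : Fin n).succ : Fin (n+1)) = ⟨a + m + 1, by omega⟩ := rfl
      rw [e1, e2] at hv
      have := ih (by omega) (by omega)
      have e3 : (p ⟨a + (m + 1), by omega⟩).1 = (p ⟨a + m + 1, by omega⟩).1 := rfl
      rw [e3, ← hv]
      exact this
  -- the function Fin k → ℤ sending j to the y-coordinate is injective
  have hyinj : Function.Injective (fun j : Fin k => (p ⟨a + (j : ℕ), by omega⟩).2) := by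
    intro i j hij
    simp only at hij
    have hxi : (p ⟨a + (i : ℕ), by omega⟩).1 = (p ⟨a + (j : ℕ), by omega⟩).1 := by
      rw [hx i (by omega) (by omega), hx (j:ℕ) (by omega) (by omega)]
    have hpt : p ⟨a + (i : ℕ), by omega⟩ = p ⟨a + (j : ℕ), by omega⟩ :=
      Prod.ext hxi hij
    have := hinj hpt
    have : a + (i : ℕ) = a + (j : ℕ) := by
      simpa [Fin.ext_iff] using this
    exact Fin.ext (by omega)
  have hsub : (Finset.univ.image fun j : Fin k => (p ⟨a + (j : ℕ), by omega⟩).2) ⊆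
      (Finset.univ.image fun i => (p i).2) := by
    intro y hy
    simp only [Finset.mem_image, Finset.mem_univ, true_and] at hy ⊢
    obtain ⟨j, hj⟩ := hy
    exact ⟨_, hj⟩
  calc k = (Finset.univ.image fun j : Fin k => (p ⟨a + (j : ℕ), by omega⟩).2).card := by
        rw [Finset.card_image_of_injective _ hyinj, Finset.card_univ, Fintype.card_fin]
    _ ≤ numRows n p := Finset.card_le_card hsub
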